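/- In the explicit two-worker extended mechanism with lying cost c > 0, the all-expert profile is not an ex post equilibrium: there exists a type profile (namely any profile in which some worker i has type B) such that worker i's lying-adjusted payoff when both workers report E is strictly less than worker i's lying-adjusted payoff when worker i deviates to reporting B while the opponent reports E. -/
import Mathlib

inductive WorkerType | B | E
deriving DecidableEq

inductive Contract | HM | HD | LM | LP
deriving DecidableEq

def payoff : Contract → WorkerType → ℝ
  | .HM, .E => 4
  | .HD, .E => 2
  | .LM, .E => 1
  | .LP, .E => 0
  | .HM, .B => 4
  | .HD, .B => 2
  | .LM, .B => 2
  | .LP, .B => 4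

def directPair : WorkerType → WorkerType → Contract × Contract
  | .B, .B => (.LM, .LM)
  | .B, .E => (.LP, .HD)
  | .E, .B => (.HD, .LP)
  | .E, .E => (.HM, .HM)

def directM (r : Fin 2 → WorkerType) (i : Fin 2) : Contract :=
  if i = 0 then (directPair (r 0) (r 1)).1 else (directPair (r 0) (r 1)).2

inductive Report | B | E | U
deriving DecidableEq

def toRep : WorkerType → Report
  | .B => .B
  | .E => .E

def extPair : Report → Report → Contract × Contract
  | .B, .B => (.LM, .LM)
  | .B, .E => (.LP, .HD)
  | .E, .B => (.HD, .LP)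
  | .E, .E => (.HM, .HM)
  | .B, .U => (.LP, .HD)
  | .E, .U => (.HD, .LP)
  | .U, .B => (.HD, .LP)
  | .U, .E => (.LP, .HD)
  | .U, .U => (.LM, .LM)

def extM (r : Fin 2 → Report) (i : Fin 2) : Contract :=
  if i = 0 then (extPair (r 0) (r 1)).1 else (extPair (r 0) (r 1)).2

def opp : WorkerType → WorkerType
  | .B => .E
  | .E => .B

def lpayX (c : ℝ) (θ : WorkerType) (r : Report) (con : Contract) : ℝ :=
  payoff con θ - (if r = toRep (opp θ) then c else 0)

/-- In the explicit extended mechanism with lying cost `c > 0`, the all-E profile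
is not an ex post equilibrium: at any type profile in which some worker `i` is a
beginner, that worker strictly gains by deviating to the truthful report B. -/
theorem allE_not_expost_explicit_ext :
    ∀ c : ℝ, 0 < c →
      (¬ ∀ (θ : Fin 2 → WorkerType) (i : Fin 2) (r : Report),
        lpayX c (θ i) Report.E (extM (fun _ => Report.E) i) ≥
          lpayX c (θ i) r (extM (Function.update (fun _ => Report.E) i r) i)) ∧
      (∀ (θ : Fin 2 → WorkerType) (i : Fin 2), θ i = WorkerType.B →
        lpayX c (θ i) Report.E (extM (fun _ => Report.E) i) <
          lpayX c (θ i) Report.B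
            (extM (Function.update (fun _ => Report.E) i Report.B) i)) := by
  intro c hc
  have h2 : ∀ (θ : Fin 2 → WorkerType) (i : Fin 2), θ i = WorkerType.B →
      lpayX c (θ i) Report.E (extM (fun _ => Report.E) i) <
        lpayX c (θ i) Report.B
          (extM (Function.update (fun _ => Report.E) i Report.B) i) := by
    intro θ i hθ
    rw [hθ]
    fin_cases i <;>
      simp [lpayX, extM, extPair, payoff, opp, toRep, Function.update] <;>
      linarith
  refine ⟨fun h => ?_, h2⟩
  have := h (fun _ => WorkerType.B) 0 Report.B
  have := h2 (fun _ => WorkerType.B) 0 rfl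
  linarith
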